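/- Let μ^Σ be an eigenmeasure of the open shift with decay rate Λ such that μ^Σ(Σ ∖ Σ'') = 0 and μ^Σ({ε : ε_n = 2 for all n ≤ −1}) = 0 (the latter condition guaranteeing that J_r takes values in [0,1)² μ^Σ-almost everywhere). Then the push-forward μ := (J_r)_* μ^Σ is a probability measure on [0,1)² and is an eigenmeasure of the open baker B_r with decay rate Λ. -/

import Mathlib

/-! Writing `q(ε) = α_{ε₀} + r_{ε₀} q(σ̂ε)` and `p(σ̂ε) = α_{ε₀} + r_{ε₀} p(ε)`, the coding map
semiconjugates the shift to the baker's map, and `J_r ε` lies in the hole exactly when `ε₀ = 1`,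
as long as `q(σ̂ε) < 1` and `p(ε) < 1`. These strict bounds fail only when the future or the past
of `ε` is constantly `2`, a `μ^Σ`-null event, so the eigenmeasure identity transfers along `J_r`. -/

open MeasureTheory
open scoped ENNReal

/-- The two-sided shift on `Σ = {0,1,2}^ℤ`. -/
def shiftMap (ε : ℤ → Fin 3) : ℤ → Fin 3 := fun n => ε (n + 1)

/-- The partition points `α₀ = 0`, `α₁ = r₀`, `α₂ = r₀ + r₁`. -/
def alphaOf (r : Fin 3 → ℝ) : Fin 3 → ℝ := ![0, r 0, r 0 + r 1]

/-- The closed baker's map `B̂_r` on the square `[0,1)²` (extended arbitrarily to `ℝ²`). -/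
noncomputable def bakerMap (r : Fin 3 → ℝ) : ℝ × ℝ → ℝ × ℝ := fun x =>
  if x.1 < r 0 then (x.1 / r 0, r 0 * x.2)
  else if x.1 < r 0 + r 1 then ((x.1 - r 0) / r 1, r 1 * x.2 + r 0)
  else ((x.1 - (r 0 + r 1)) / r 2, r 2 * x.2 + (r 0 + r 1))

/-- The coding map `J_r : Σ → [0,1]²`. -/
noncomputable def codingMap (r : Fin 3 → ℝ) (ε : ℤ → Fin 3) : ℝ × ℝ :=
  (∑' k : ℕ, (∏ i ∈ Finset.range k, r (ε (i : ℤ))) * alphaOf r (ε (k : ℤ)),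
   ∑' k : ℕ, (∏ i ∈ Finset.range k, r (ε (-(i + 1) : ℤ))) * alphaOf r (ε (-(k + 1) : ℤ)))

/-- The unit square `[0,1) × [0,1)`. -/
def unitSquare : Set (ℝ × ℝ) := Set.Ico 0 1 ×ˢ Set.Ico 0 1

/-- The hole `H = [r₀, 1-r₂) × [0,1)` of the open baker's map. -/
def bakerHole (r : Fin 3 → ℝ) : Set (ℝ × ℝ) := Set.Ico (r 0) (1 - r 2) ×ˢ Set.Ico 0 1

/-- The complement `Σ \ Σ''` of the good set `Σ''`. -/
def badSet : Set (ℤ → Fin 3) :=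
  {ε | (∀ n : ℤ, n ≤ -1 → ε n = 2) ∧ ε 0 ≠ 1} ∪ {ε | ∀ n : ℤ, 1 ≤ n → ε n = 2}

open Finset

lemma alphaOf_nonneg {r : Fin 3 → ℝ} (hr : ∀ i, 0 < r i) (e : Fin 3) : 0 ≤ alphaOf r e := by
  fin_cases e <;> simp [alphaOf] <;> linarith [hr 0, hr 1]

lemma alphaOf_add_le_one {r : Fin 3 → ℝ} (hr : ∀ i, 0 < r i) (hsum : r 0 + r 1 + r 2 = 1)
    (e : Fin 3) : alphaOf r e + r e ≤ 1 := by
  fin_cases e <;> simp [alphaOf] <;> linarith [hr 0, hr 1, hr 2]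

lemma alphaOf_add_lt_one {r : Fin 3 → ℝ} (hr : ∀ i, 0 < r i) (hsum : r 0 + r 1 + r 2 = 1)
    {e : Fin 3} (he : e ≠ 2) : alphaOf r e + r e < 1 := by
  fin_cases e <;> simp [alphaOf] at he ⊢ <;> linarith [hr 0, hr 1, hr 2]

noncomputable def digitExpansion (r : Fin 3 → ℝ) (s : ℕ → Fin 3) : ℝ :=
  ∑' k : ℕ, (∏ i ∈ range k, r (s i)) * alphaOf r (s k)

section digitExpansion

variable {r : Fin 3 → ℝ} (hr : ∀ i, 0 < r i) (hsum : r 0 + r 1 + r 2 = 1)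
include hr

lemma digitExpansion_term_nonneg (s : ℕ → Fin 3) (k : ℕ) :
    0 ≤ (∏ i ∈ range k, r (s i)) * alphaOf r (s k) :=
  mul_nonneg (prod_nonneg fun _ _ => (hr _).le) (alphaOf_nonneg hr _)

lemma digitExpansion_nonneg (s : ℕ → Fin 3) : 0 ≤ digitExpansion r s :=
  tsum_nonneg (digitExpansion_term_nonneg hr s)

include hsum

lemma sum_range_digitExpansion_add_prod_le_one (s : ℕ → Fin 3) (n : ℕ) :
    ∑ k ∈ range n, (∏ i ∈ range k, r (s i)) * alphaOf r (s k) + ∏ i ∈ range n, r (s i) ≤ 1 := by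
  induction n with
  | zero => simp
  | succ n ih =>
    rw [sum_range_succ, prod_range_succ]
    have hP : 0 ≤ ∏ i ∈ range n, r (s i) := prod_nonneg fun _ _ => (hr _).le
    nlinarith [mul_le_mul_of_nonneg_left (alphaOf_add_le_one hr hsum (s n)) hP]

lemma sum_range_digitExpansion_le_one (s : ℕ → Fin 3) (n : ℕ) :
    ∑ k ∈ range n, (∏ i ∈ range k, r (s i)) * alphaOf r (s k) ≤ 1 :=
  (le_add_of_nonneg_right (prod_nonneg fun _ _ => (hr _).le)).trans
    (sum_range_digitExpansion_add_prod_le_one hr hsum s n)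

lemma summable_digitExpansion (s : ℕ → Fin 3) :
    Summable fun k => (∏ i ∈ range k, r (s i)) * alphaOf r (s k) :=
  summable_of_sum_range_le (digitExpansion_term_nonneg hr s)
    (sum_range_digitExpansion_le_one hr hsum s)

lemma digitExpansion_le_one (s : ℕ → Fin 3) : digitExpansion r s ≤ 1 :=
  Real.tsum_le_of_sum_range_le (digitExpansion_term_nonneg hr s)
    (sum_range_digitExpansion_le_one hr hsum s)

lemma digitExpansion_eq (s : ℕ → Fin 3) :
    digitExpansion r s = alphaOf r (s 0) + r (s 0) * digitExpansion r (fun k => s (k + 1)) := by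
  rw [digitExpansion, (summable_digitExpansion hr hsum s).tsum_eq_zero_add, digitExpansion,
    ← tsum_mul_left]
  simp only [range_zero, prod_empty, one_mul, prod_range_succ', mul_assoc, mul_comm (r (s 0))]

lemma digitExpansion_lt_one (m : ℕ) {s : ℕ → Fin 3} (hm : s m ≠ 2) : digitExpansion r s < 1 := by
  induction m generalizing s with
  | zero =>
    rw [digitExpansion_eq hr hsum]
    nlinarith [alphaOf_add_lt_one hr hsum hm, digitExpansion_le_one hr hsum (fun k => s (k + 1)),
      hr (s 0)]
  | succ m ih =>
    rw [digitExpansion_eq hr hsum]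
    nlinarith [alphaOf_add_le_one hr hsum (s 0), ih (s := fun k => s (k + 1)) hm, hr (s 0)]

end digitExpansion

lemma codingMap_eq (r : Fin 3 → ℝ) (ε : ℤ → Fin 3) :
    codingMap r ε = (digitExpansion r fun k : ℕ => ε k,
      digitExpansion r fun k : ℕ => ε (-(k + 1))) :=
  rfl

section codingMap

variable {r : Fin 3 → ℝ} (hr : ∀ i, 0 < r i) (hsum : r 0 + r 1 + r 2 = 1)
include hr

lemma codingMap_fst_nonneg (ε : ℤ → Fin 3) : 0 ≤ (codingMap r ε).1 :=
  digitExpansion_nonneg hr _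

lemma codingMap_snd_nonneg (ε : ℤ → Fin 3) : 0 ≤ (codingMap r ε).2 :=
  digitExpansion_nonneg hr _

include hsum

lemma codingMap_fst_eq (ε : ℤ → Fin 3) :
    (codingMap r ε).1 = alphaOf r (ε 0) + r (ε 0) * (codingMap r (shiftMap ε)).1 := by
  rw [codingMap_eq, codingMap_eq, digitExpansion_eq hr hsum]
  simp only [shiftMap, Nat.cast_zero, Nat.cast_succ]

lemma codingMap_shiftMap_snd (ε : ℤ → Fin 3) :
    (codingMap r (shiftMap ε)).2 = alphaOf r (ε 0) + r (ε 0) * (codingMap r ε).2 := by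
  have h := digitExpansion_eq hr hsum fun k : ℕ => ε (-k)
  simp only [Nat.cast_zero, neg_zero, Nat.cast_succ] at h
  have hshift : (fun k : ℕ => shiftMap ε (-(k + 1))) = fun k : ℕ => ε (-k) :=
    funext fun k => congrArg ε (by ring)
  rwa [codingMap_eq, codingMap_eq, hshift]

lemma codingMap_shiftMap_fst_lt_one {ε : ℤ → Fin 3} (h : ∃ k, 1 ≤ k ∧ ε k ≠ 2) :
    (codingMap r (shiftMap ε)).1 < 1 := by
  obtain ⟨k, hk, hε⟩ := h
  refine digitExpansion_lt_one hr hsum (k - 1).toNat ?_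
  simpa only [shiftMap, Int.toNat_sub_of_le hk, sub_add_cancel] using hε

lemma codingMap_snd_lt_one {ε : ℤ → Fin 3} (h : ∃ n, n ≤ -1 ∧ ε n ≠ 2) :
    (codingMap r ε).2 < 1 := by
  obtain ⟨n, hn, hε⟩ := h
  refine digitExpansion_lt_one hr hsum (-n - 1).toNat ?_
  simpa only [Int.toNat_of_nonneg (by omega : 0 ≤ -n - 1), sub_add_cancel, neg_neg] using hε

end codingMap

section bakerMap

variable {r : Fin 3 → ℝ} (hr : ∀ i, 0 < r i) (hsum : r 0 + r 1 + r 2 = 1)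
include hr

lemma bakerMap_of_fst_mem_Ico {e : Fin 3} {x : ℝ × ℝ}
    (hx : x.1 ∈ Set.Ico (alphaOf r e) (alphaOf r e + r e)) :
    bakerMap r x = ((x.1 - alphaOf r e) / r e, r e * x.2 + alphaOf r e) := by
  obtain ⟨hlo, hhi⟩ := hx
  have := hr 0; have := hr 1; have := hr 2
  unfold bakerMap
  fin_cases e <;> simp [alphaOf] at hlo hhi ⊢ <;> split_ifs <;> first | rfl | (intros; linarith)

include hsum in
lemma mem_bakerHole_iff_of_fst_mem_Ico {e : Fin 3} {x : ℝ × ℝ}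
    (hx : x.1 ∈ Set.Ico (alphaOf r e) (alphaOf r e + r e)) (hx₂ : x.2 ∈ Set.Ico 0 1) :
    x ∈ bakerHole r ↔ e = 1 := by
  obtain ⟨hlo, hhi⟩ := hx
  have := hr 0; have := hr 1; have := hr 2
  simp only [bakerHole, Set.mem_prod, hx₂, and_true, Set.mem_Ico]
  fin_cases e <;> simp [alphaOf] at hlo hhi ⊢ <;>
    first | (intro; linarith) | constructor <;> linarith

end bakerMap

def regularSet : Set (ℤ → Fin 3) :=
  {ε | (∃ k, 1 ≤ k ∧ ε k ≠ 2) ∧ ∃ n, n ≤ -1 ∧ ε n ≠ 2}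

lemma regularSet_compl_subset :
    regularSetᶜ ⊆ badSet ∪ {ε | ∀ n : ℤ, n ≤ -1 → ε n = 2} := by
  intro ε hε
  simp only [badSet, Set.mem_union, Set.mem_ofPred_eq]
  by_contra! h
  exact hε ⟨h.1.2, h.2⟩

section regularSet

variable {r : Fin 3 → ℝ} (hr : ∀ i, 0 < r i) (hsum : r 0 + r 1 + r 2 = 1) {ε : ℤ → Fin 3}
include hr hsum

lemma codingMap_fst_mem_Ico (hε : ε ∈ regularSet) :
    (codingMap r ε).1 ∈ Set.Ico (alphaOf r (ε 0)) (alphaOf r (ε 0) + r (ε 0)) := by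
  have hlt := codingMap_shiftMap_fst_lt_one hr hsum hε.1
  have hnonneg := codingMap_fst_nonneg hr (shiftMap ε)
  rw [codingMap_fst_eq hr hsum]
  constructor <;> nlinarith [hr (ε 0)]

lemma codingMap_snd_mem_Ico (hε : ε ∈ regularSet) : (codingMap r ε).2 ∈ Set.Ico 0 1 :=
  ⟨codingMap_snd_nonneg hr ε, codingMap_snd_lt_one hr hsum hε.2⟩

lemma codingMap_mem_unitSquare (hε : ε ∈ regularSet) : codingMap r ε ∈ unitSquare := by
  obtain ⟨hlo, hhi⟩ := codingMap_fst_mem_Ico hr hsum hε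
  exact ⟨⟨(alphaOf_nonneg hr _).trans hlo, hhi.trans_le (alphaOf_add_le_one hr hsum _)⟩,
    codingMap_snd_mem_Ico hr hsum hε⟩

lemma codingMap_mem_bakerHole_iff (hε : ε ∈ regularSet) :
    codingMap r ε ∈ bakerHole r ↔ ε 0 = 1 :=
  mem_bakerHole_iff_of_fst_mem_Ico hr hsum (codingMap_fst_mem_Ico hr hsum hε)
    (codingMap_snd_mem_Ico hr hsum hε)

lemma bakerMap_codingMap (hε : ε ∈ regularSet) :
    bakerMap r (codingMap r ε) = codingMap r (shiftMap ε) := by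
  rw [bakerMap_of_fst_mem_Ico hr (codingMap_fst_mem_Ico hr hsum hε)]
  refine Prod.ext ?_ (by rw [codingMap_shiftMap_snd hr hsum, add_comm])
  rw [codingMap_fst_eq hr hsum ε, add_sub_cancel_left, mul_div_cancel_left₀ _ (hr _).ne']

end regularSet

lemma MeasureTheory.Measure.map_preimage_inter_eq_of_ae_semiconj {α β : Type*}
    [MeasurableSpace α] [MeasurableSpace β] {μ : Measure α} {J : α → β} {T : α → α} {B : β → β}
    {A : Set α} {M : Set β} (hJ : Measurable J) (hB : Measurable B) (hM : MeasurableSet M)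
    (hsemiconj : ∀ᵐ x ∂μ, B (J x) = J (T x)) (hmem : ∀ᵐ x ∂μ, J x ∈ M ↔ x ∈ A)
    {S : Set β} (hS : MeasurableSet S) :
    μ.map J (B ⁻¹' S ∩ M) = μ (T ⁻¹' (J ⁻¹' S) ∩ A) := by
  rw [Measure.map_apply hJ ((hB hS).inter hM)]
  refine measure_congr (Filter.eventuallyEq_set.2 ?_)
  filter_upwards [hsemiconj, hmem] with x hx hxA
  simp only [Set.mem_inter_iff, Set.mem_preimage, hx, hxA]

lemma measurable_digitExpansion {r : Fin 3 → ℝ} (hr : ∀ i, 0 < r i)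
    (hsum : r 0 + r 1 + r 2 = 1) : Measurable (digitExpansion r) := by
  have hr' : Measurable r := measurable_of_countable r
  have hα : Measurable (alphaOf r) := measurable_of_countable _
  have hpartial : ∀ n, Measurable fun s : ℕ → Fin 3 =>
      ∑ k ∈ range n, (∏ i ∈ range k, r (s i)) * alphaOf r (s k) := by
    intro n
    fun_prop
  exact measurable_of_tendsto_metrizable hpartial
    (tendsto_pi_nhds.2 fun s => (summable_digitExpansion hr hsum s).hasSum.tendsto_sum_nat)

lemma measurable_codingMap {r : Fin 3 → ℝ} (hr : ∀ i, 0 < r i) (hsum : r 0 + r 1 + r 2 = 1) :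
    Measurable (codingMap r) := by
  have := measurable_digitExpansion hr hsum
  unfold codingMap
  fun_prop

lemma measurable_bakerMap (r : Fin 3 → ℝ) : Measurable (bakerMap r) :=
  Measurable.ite (measurableSet_lt measurable_fst measurable_const) (by fun_prop) <|
    Measurable.ite (measurableSet_lt measurable_fst measurable_const) (by fun_prop) (by fun_prop)

/-- If `μ^Σ` is an eigenmeasure of the open shift with decay rate `Λ`
which charges neither `Σ \ Σ''` nor `{ε : ε_n = 2 for all n ≤ -1}`, then its push-forward
under `J_r` is a probability measure on `[0,1)²` and an eigenmeasure of the open baker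
`B_r` with decay rate `Λ`. -/
theorem pushforward_of_openShift_eigenmeasure
    (r : Fin 3 → ℝ) (hr : ∀ i, 0 < r i) (hsum : r 0 + r 1 + r 2 = 1)
    (muS : Measure (ℤ → Fin 3)) [IsProbabilityMeasure muS]
    (Λ : ℝ≥0∞)
    (heig : ∀ S : Set (ℤ → Fin 3), MeasurableSet S →
      muS (shiftMap ⁻¹' S ∩ {ε | ε 0 ≠ 1}) = Λ * muS S)
    (hbad : muS badSet = 0)
    (htail : muS {ε | ∀ n : ℤ, n ≤ -1 → ε n = 2} = 0) :
    IsProbabilityMeasure (muS.map (codingMap r)) ∧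
    (muS.map (codingMap r)) unitSquare = 1 ∧
    ∀ S : Set (ℝ × ℝ), MeasurableSet S →
      (muS.map (codingMap r)) (bakerMap r ⁻¹' S ∩ (unitSquare \ bakerHole r))
        = Λ * (muS.map (codingMap r)) S := by
  have hJ := measurable_codingMap hr hsum
  have hregular : ∀ᵐ ε ∂muS, ε ∈ regularSet :=
    mem_ae_iff.2 (measure_mono_null regularSet_compl_subset (measure_union_null hbad htail))
  have hsquare : MeasurableSet unitSquare := measurableSet_Ico.prod measurableSet_Ico
  have hhole : MeasurableSet (bakerHole r) := measurableSet_Ico.prod measurableSet_Ico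
  refine ⟨Measure.isProbabilityMeasure_map hJ.aemeasurable, ?_, fun S hS => ?_⟩
  · rw [Measure.map_apply hJ hsquare, ← mem_ae_iff_prob_eq_one (hJ hsquare)]
    filter_upwards [hregular] with ε hε using codingMap_mem_unitSquare hr hsum hε
  rw [Measure.map_preimage_inter_eq_of_ae_semiconj hJ (measurable_bakerMap r)
    (hsquare.diff hhole) ?_ ?_ hS, heig _ (hJ hS), Measure.map_apply hJ hS]
  · filter_upwards [hregular] with ε hε using bakerMap_codingMap hr hsum hε
  · filter_upwards [hregular] with ε hε
    simp [codingMap_mem_unitSquare hr hsum hε, codingMap_mem_bakerHole_iff hr hsum hε]
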